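/- A compact connected metrizable linearly ordered topological space with at least two points, equipped with the order topology, is order-homeomorphic to the unit interval [0,1]. -/

import Mathlib

/-!
Connectedness makes `C` densely ordered, so by Cantor's back-and-forth theorem a countable dense
subset `s` of `C` avoiding the endpoints is order-isomorphic to the rationals in `(0, 1)`.
Extending this isomorphism `ψ` by suprema, `f x = sup {ψ d | d ∈ s, d ≤ x}`, gives a strictly
monotone map `C → [0, 1]` with dense range. A monotone map with dense range into a densely
ordered space is continuous, so compactness of `C` makes its range closed, hence all of `[0, 1]`;
and an order isomorphism between order topologies is a homeomorphism.
-/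

open Set TopologicalSpace

section Subtype

variable {α : Type*} [LinearOrder α] [TopologicalSpace α] [OrderTopology α] [DenselyOrdered α]
  {s : Set α}

theorem Dense.denselyOrdered_subtype (hs : Dense s) : DenselyOrdered s where
  dense _ _ h :=
    let ⟨c, hc, hac, hcb⟩ := hs.exists_between h
    ⟨⟨c, hc⟩, hac, hcb⟩

theorem Dense.noMinOrder_subtype (hs : Dense s) (hbot : ∀ x, IsBot x → x ∉ s) :
    NoMinOrder s where
  exists_lt d := by
    obtain ⟨y, hy⟩ : ∃ y, y < (d : α) := by
      simpa [IsBot] using mt (hbot d) (not_not.2 d.2)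
    obtain ⟨c, hc, -, hcd⟩ := hs.exists_between hy
    exact ⟨⟨c, hc⟩, hcd⟩

theorem Dense.noMaxOrder_subtype (hs : Dense s) (htop : ∀ x, IsTop x → x ∉ s) :
    NoMaxOrder s where
  exists_gt d := by
    obtain ⟨y, hy⟩ : ∃ y, (d : α) < y := by
      simpa [IsTop] using mt (htop d) (not_not.2 d.2)
    obtain ⟨c, hc, hdc, -⟩ := hs.exists_between hy
    exact ⟨⟨c, hc⟩, hdc⟩

end Subtype

theorem exists_strictMono_extend_of_exists_between {α β : Type*} [LinearOrder α]
    [CompleteLinearOrder β] {s : Set α} (hs : ∀ ⦃x y⦄, x < y → ∃ d ∈ s, x < d ∧ d < y)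
    {ψ : s → β} (hψ : StrictMono ψ) : ∃ f : α → β, StrictMono f ∧ ∀ d : s, f d = ψ d := by
  let f : α → β := fun x => sSup (ψ '' {d | (d : α) ≤ x})
  have le_f {x : α} {d : s} (h : (d : α) ≤ x) : ψ d ≤ f x := le_sSup ⟨d, h, rfl⟩
  have f_le {x : α} {d : s} (h : x ≤ d) : f x ≤ ψ d :=
    sSup_le <| by
      rintro _ ⟨d', hd', rfl⟩
      exact hψ.monotone (hd'.trans h)
  refine ⟨f, fun x y hxy => ?_, fun d => (f_le le_rfl).antisymm (le_f le_rfl)⟩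
  obtain ⟨d₁, hd₁, hxd₁, hd₁y⟩ := hs hxy
  obtain ⟨d₂, hd₂, hd₁d₂, hd₂y⟩ := hs hd₁y
  calc f x ≤ ψ ⟨d₁, hd₁⟩ := f_le hxd₁.le
    _ < ψ ⟨d₂, hd₂⟩ := hψ hd₁d₂
    _ ≤ f y := le_f hd₂y.le

theorem exists_strictMono_denseRange_unitInterval (E : Type*) [LinearOrder E] [Countable E]
    [DenselyOrdered E] [NoMinOrder E] [NoMaxOrder E] [Nonempty E] :
    ∃ ψ : E → unitInterval, StrictMono ψ ∧ DenseRange ψ := by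
  have : Nonempty (Ioo (0 : ℚ) 1) := ⟨⟨1 / 2, by norm_num⟩⟩
  obtain ⟨φ⟩ := Order.iso_of_countable_dense E (Ioo (0 : ℚ) 1)
  let j : Ioo (0 : ℚ) 1 → unitInterval := fun q =>
    ⟨q, by exact_mod_cast q.2.1.le, by exact_mod_cast q.2.2.le⟩
  have hj : StrictMono j := fun q r h => by
    change (q : ℝ) < r
    exact_mod_cast h
  refine ⟨j ∘ φ, hj.comp φ.strictMono, ?_⟩
  rw [DenseRange, φ.surjective.range_comp]
  refine dense_of_exists_between fun a b hab => ?_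
  obtain ⟨q, haq, hqb⟩ := exists_rat_btwn (show (a : ℝ) < b from hab)
  have hq : q ∈ Ioo (0 : ℚ) 1 :=
    ⟨by exact_mod_cast a.2.1.trans_lt haq, by exact_mod_cast hqb.trans_le b.2.2⟩
  exact ⟨j ⟨q, hq⟩, mem_range_self _, haq, hqb⟩

theorem exists_strictMono_denseRange_unitInterval_of_separableSpace (C : Type*) [LinearOrder C]
    [TopologicalSpace C] [OrderTopology C] [DenselyOrdered C] [SeparableSpace C] [Nontrivial C] :
    ∃ f : C → unitInterval, StrictMono f ∧ DenseRange f := by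
  obtain ⟨s, hs_count, hs_dense, hs_bot, hs_top⟩ := exists_countable_dense_no_bot_top C
  have := hs_count.to_subtype
  have := hs_dense.denselyOrdered_subtype
  have := hs_dense.noMinOrder_subtype hs_bot
  have := hs_dense.noMaxOrder_subtype hs_top
  have := hs_dense.nonempty.to_subtype
  obtain ⟨ψ, hψ_mono, hψ_dense⟩ := exists_strictMono_denseRange_unitInterval s
  obtain ⟨f, hf_mono, hf_ext⟩ :=
    exists_strictMono_extend_of_exists_between (fun _ _ => hs_dense.exists_between) hψ_mono
  refine ⟨f, hf_mono, hψ_dense.mono ?_⟩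
  rintro _ ⟨d, rfl⟩
  exact ⟨d, hf_ext d⟩

theorem Monotone.surjective_of_denseRange {α β : Type*} [LinearOrder α] [TopologicalSpace α]
    [OrderTopology α] [CompactSpace α] [LinearOrder β] [TopologicalSpace β] [OrderTopology β]
    [DenselyOrdered β] {f : α → β} (hf : Monotone f) (hd : DenseRange f) :
    Function.Surjective f := by
  have hclosed : IsClosed (range f) :=
    (isCompact_range (hf.continuous_of_denseRange hd)).isClosed
  exact range_eq_univ.1 (hclosed.closure_eq ▸ hd.closure_eq)

/-- A compact connected metrizable linearly ordered topological space with at least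
two points is order-homeomorphic to the unit interval [0,1]. -/
theorem orderHomeo_unitInterval (C : Type*) [LinearOrder C] [TopologicalSpace C]
    [OrderTopology C] [CompactSpace C] [ConnectedSpace C]
    [TopologicalSpace.MetrizableSpace C] [Nontrivial C] :
    ∃ e : C ≃o unitInterval, Continuous e ∧ Continuous e.symm := by
  have := denselyOrdered_of_preconnectedSpace (α := C)
  obtain ⟨f, hf_mono, hf_dense⟩ := exists_strictMono_denseRange_unitInterval_of_separableSpace C
  let e := hf_mono.orderIsoOfSurjective f (hf_mono.monotone.surjective_of_denseRange hf_dense)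
  exact ⟨e, e.continuous, e.symm.continuous⟩
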